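/- Let k and μ be real numbers with 0 < k < 1 and μ > 0; set k' = √(1 − k²) and φ = arcsin(tanh μ). Then ∫_0^{π/2} F(u, k') · sin u · cos u / ( (1 + k'² sinh²μ sin²u) · √(1 − k'² sin²u) ) du = (−1/(k'² sinh μ cosh μ)) · [ K(k') · arctanh(k tanh μ) − (π/2)·F(φ, k) ]. -/

import Mathlib

set_option maxRecDepth 4000


open Real intervalIntegral

/-- Incomplete elliptic integral of the first kind `F(φ, k)`. -/
noncomputable def ellipticF (φ k : ℝ) : ℝ :=
  ∫ θ in (0:ℝ)..φ, (1 - k ^ 2 * Real.sin θ ^ 2) ^ (-(1:ℝ)/2)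

/-- Incomplete elliptic integral of the second kind `E(φ, k)`. -/
noncomputable def ellipticE (φ k : ℝ) : ℝ :=
  ∫ θ in (0:ℝ)..φ, (1 - k ^ 2 * Real.sin θ ^ 2) ^ ((1:ℝ)/2)

/-- Complete elliptic integral of the first kind `K(k)`. -/
noncomputable def completeK (k : ℝ) : ℝ := ellipticF (Real.pi / 2) k

/-- Complete elliptic integral of the second kind `E(k)`. -/
noncomputable def completeE (k : ℝ) : ℝ := ellipticE (Real.pi / 2) k

/-- Inverse hyperbolic tangent. -/
noncomputable def arctanh (x : ℝ) : ℝ := Real.log ((1 + x) / (1 - x)) / 2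

lemma arctanh_hasDerivAt {x : ℝ} (h1 : -1 < x) (h2 : x < 1) :
    HasDerivAt arctanh (1 / (1 - x ^ 2)) x := by
  have hp : (0:ℝ) < 1 + x := by linarith
  have hm : (0:ℝ) < 1 - x := by linarith
  have hq : HasDerivAt (fun y : ℝ => (1 + y) / (1 - y)) (2 / (1 - x) ^ 2) x := by
    have h1' : HasDerivAt (fun y : ℝ => 1 + y) 1 x := by
      simpa using (hasDerivAt_id x).const_add (1:ℝ)
    have h2' : HasDerivAt (fun y : ℝ => 1 - y) (-1) x := by
      simpa using (hasDerivAt_id x).const_sub (1:ℝ)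
    have := h1'.div h2' (by positivity)
    refine this.congr_deriv ?_
    symm
    field_simp
    ring
  have hlog := (Real.hasDerivAt_log (by positivity : (1 + x)/(1 - x) ≠ 0)).comp x hq
  have := hlog.div_const 2
  refine this.congr_deriv ?_
  symm
  have hx2 : 1 - x ^ 2 ≠ 0 := by nlinarith
  field_simp
  ring

lemma arctanh_tanh (x : ℝ) : arctanh (Real.tanh x) = x := by
  unfold arctanh
  rw [Real.tanh_eq_sinh_div_cosh]
  have hc : (0:ℝ) < Real.cosh x := Real.cosh_pos x
  have e1 := Real.cosh_add_sinh x
  have e2 := Real.cosh_sub_sinh x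
  have hex := Real.exp_pos x
  have hexm := Real.exp_pos (-x)
  have hem : Real.exp x * Real.exp (-x) = 1 := by
    rw [← Real.exp_add]; simp
  have : (1 + Real.sinh x / Real.cosh x) / (1 - Real.sinh x / Real.cosh x)
      = Real.exp (2 * x) := by
    have hnum : 1 + Real.sinh x / Real.cosh x = Real.exp x / Real.cosh x := by
      field_simp
      linarith
    have hden : 1 - Real.sinh x / Real.cosh x = Real.exp (-x) / Real.cosh x := by
      field_simp
      linarith
    rw [hnum, hden]
    rw [div_div_div_cancel_right₀ (ne_of_gt hc)]
    rw [show (2:ℝ) * x = x - (-x) by ring, Real.exp_sub]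
  rw [this, Real.log_exp]
  ring

lemma arctanh_zero : arctanh 0 = 0 := by simp [arctanh]

lemma sin_sq_integral {b : ℝ} (hb : 0 ≤ b) :
    ∫ θ in (0:ℝ)..(π/2), 1 / (1 + b * Real.sin θ ^ 2)
      = π / (2 * Real.sqrt (1 + b)) := by
  set c := 1 + b with hc
  have hc1 : (1:ℝ) ≤ c := by linarith
  have hc0 : (0:ℝ) < c := by linarith
  set r := Real.sqrt c with hr
  have hr1 : (1:ℝ) ≤ r := by
    rw [hr, show (1:ℝ) = Real.sqrt 1 by simp]
    exact Real.sqrt_le_sqrt hc1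
  have hr0 : (0:ℝ) < r := by linarith
  have hrsq : r ^ 2 = c := Real.sq_sqrt hc0.le
  set G : ℝ → ℝ := fun θ => (θ + Real.arctan ((r - 1) * Real.sin θ * Real.cos θ /
      (Real.cos θ ^ 2 + r * Real.sin θ ^ 2))) / r with hG
  have hD : ∀ θ : ℝ, 0 < Real.cos θ ^ 2 + r * Real.sin θ ^ 2 := by
    intro θ
    nlinarith [sin_sq_add_cos_sq θ, sq_nonneg (Real.sin θ), sq_nonneg (Real.cos θ)]
  have hderiv : ∀ θ ∈ Set.uIcc (0:ℝ) (π/2),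
      HasDerivAt G (1 / (1 + b * Real.sin θ ^ 2)) θ := by
    intro θ _
    have hs := Real.hasDerivAt_sin θ
    have hco := Real.hasDerivAt_cos θ
    have hN : HasDerivAt (fun θ => (r - 1) * Real.sin θ * Real.cos θ)
        ((r - 1) * (Real.cos θ ^ 2 - Real.sin θ ^ 2)) θ := by
      have := ((hs.const_mul (r - 1)).mul hco)
      refine this.congr_deriv ?_
      symm
      ring
    have hDd : HasDerivAt (fun θ => Real.cos θ ^ 2 + r * Real.sin θ ^ 2)
        (2 * (r - 1) * Real.sin θ * Real.cos θ) θ := by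
      have h1 : HasDerivAt (fun θ => Real.cos θ ^ 2) (2 * Real.cos θ * (-Real.sin θ)) θ := by
        simpa using hco.fun_pow 2
      have h2 : HasDerivAt (fun θ => r * Real.sin θ ^ 2) (r * (2 * Real.sin θ * Real.cos θ)) θ := by
        simpa [mul_assoc] using (hs.pow 2).const_mul r
      have := h1.add h2
      refine this.congr_deriv ?_
      symm
      ring
    have hq := hN.div hDd (ne_of_gt (hD θ))
    have harc := (Real.hasDerivAt_arctan _).comp θ hq
    have hfull := ((hasDerivAt_id θ).add harc).div_const r
    refine hfull.congr_deriv ?_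
    symm
    simp only [Pi.div_apply]
    set s := Real.sin θ
    set co := Real.cos θ
    have hsc : s ^ 2 + co ^ 2 = 1 := sin_sq_add_cos_sq θ
    have hDθ := hD θ
    have hDne : (co ^ 2 + r * s ^ 2) ≠ 0 := ne_of_gt hDθ
    have hb' : b = r ^ 2 - 1 := by rw [hrsq]; ring
    have hP : (0:ℝ) < 1 + (r ^ 2 - 1) * s ^ 2 := by nlinarith [sq_nonneg s]
    have e1 : (co ^ 2 + r * s ^ 2) ^ 2 + ((r - 1) * s * co) ^ 2 = 1 + (r ^ 2 - 1) * s ^ 2 := by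
      linear_combination (co ^ 2 + 1 + r ^ 2 * s ^ 2) * hsc
    have e2 : (r - 1) * (co ^ 2 - s ^ 2) * (co ^ 2 + r * s ^ 2) -
        (r - 1) * s * co * (2 * (r - 1) * s * co) = (r - 1) * (1 - (r + 1) * s ^ 2) := by
      linear_combination ((r - 1) * (co ^ 2 - r * s ^ 2 + 1)) * hsc
    have h3 : 1 + ((r - 1) * s * co / (co ^ 2 + r * s ^ 2)) ^ 2
        = (1 + (r ^ 2 - 1) * s ^ 2) / (co ^ 2 + r * s ^ 2) ^ 2 := by
      rw [← e1]; field_simp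
    rw [h3, e2, hb']
    field_simp
    ring
  have hcont : Continuous fun θ => 1 / (1 + b * Real.sin θ ^ 2) := by
    apply Continuous.div continuous_const
    · continuity
    · intro θ
      have : (0:ℝ) < 1 + b * Real.sin θ ^ 2 := by nlinarith [sq_nonneg (Real.sin θ)]
      linarith
  rw [intervalIntegral.integral_eq_sub_of_hasDerivAt hderiv
    (hcont.intervalIntegrable _ _)]
  have h0 : G 0 = 0 := by simp [hG]
  have h2 : G (π/2) = π / 2 / r := by
    simp only [hG, Real.sin_pi_div_two, Real.cos_pi_div_two]
    norm_num
  rw [h0, h2]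
  ring

lemma tanh_hasDerivAt (x : ℝ) : HasDerivAt Real.tanh (1 / Real.cosh x ^ 2) x := by
  have h := (Real.hasDerivAt_sinh x).div (Real.hasDerivAt_cosh x) (ne_of_gt (Real.cosh_pos x))
  have heq : ∀ y, Real.tanh y = Real.sinh y / Real.cosh y := fun y => Real.tanh_eq_sinh_div_cosh y
  rw [funext heq]
  refine h.congr_deriv ?_
  symm
  have := Real.cosh_sq_sub_sinh_sq x
  field_simp
  linarith

lemma tanh_lt_one' (x : ℝ) : Real.tanh x < 1 := by
  rw [Real.tanh_eq_sinh_div_cosh, div_lt_one (Real.cosh_pos x)]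
  have := Real.cosh_sub_sinh x
  have := Real.exp_pos (-x)
  linarith

lemma neg_one_lt_tanh' (x : ℝ) : -1 < Real.tanh x := by
  rw [Real.tanh_eq_sinh_div_cosh, lt_div_iff₀ (Real.cosh_pos x)]
  have := Real.cosh_add_sinh x
  have := Real.exp_pos x
  linarith

lemma one_sub_tanh_sq (x : ℝ) : 1 - Real.tanh x ^ 2 = 1 / Real.cosh x ^ 2 := by
  rw [Real.tanh_eq_sinh_div_cosh]
  have h := Real.cosh_sq_sub_sinh_sq x
  have := Real.cosh_pos x
  field_simp
  linarith

lemma ellipticF_integrand_cont {κ : ℝ} (hκ : κ ^ 2 < 1) :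
    Continuous fun θ : ℝ => (1 - κ ^ 2 * Real.sin θ ^ 2) ^ (-(1:ℝ)/2) := by
  have hpos : ∀ θ : ℝ, 0 < 1 - κ ^ 2 * Real.sin θ ^ 2 := by
    intro θ
    nlinarith [Real.sin_sq_le_one θ, sq_nonneg κ, sq_nonneg (Real.sin θ), Real.neg_one_le_sin θ,
      Real.sin_le_one θ, sq_nonneg (κ * Real.sin θ)]
  exact (by continuity : Continuous fun θ : ℝ => 1 - κ ^ 2 * Real.sin θ ^ 2).rpow_const
    fun θ => Or.inl (ne_of_gt (hpos θ))

lemma ellipticF_hasDerivAt {κ : ℝ} (hκ : κ ^ 2 < 1) (x : ℝ) :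
    HasDerivAt (fun φ => ellipticF φ κ) ((1 - κ ^ 2 * Real.sin x ^ 2) ^ (-(1:ℝ)/2)) x := by
  have hc := ellipticF_integrand_cont hκ
  exact intervalIntegral.integral_hasDerivAt_right ((hc.intervalIntegrable _ _))
    (hc.aestronglyMeasurable.stronglyMeasurableAtFilter) hc.continuousAt

lemma rpow_neg_half_eq {x : ℝ} (hx : 0 ≤ x) : x ^ (-(1:ℝ)/2) = 1 / Real.sqrt x := by
  rw [show -(1:ℝ)/2 = -(1/2:ℝ) by ring, Real.rpow_neg hx, ← Real.sqrt_eq_rpow, one_div]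

lemma psi_hasDerivAt {k : ℝ} (hk2 : k ^ 2 < 1) (ν : ℝ) :
    HasDerivAt (fun ν => ellipticF (Real.arcsin (Real.tanh ν)) k)
      ((1 - k ^ 2 * Real.tanh ν ^ 2) ^ (-(1:ℝ)/2) * (1 / Real.cosh ν)) ν := by
  have ht1 := tanh_lt_one' ν
  have ht2 := neg_one_lt_tanh' ν
  have harcsin := Real.hasDerivAt_arcsin (ne_of_gt ht2) (ne_of_lt ht1)
  have htanh := tanh_hasDerivAt ν
  have hF := ellipticF_hasDerivAt hk2 (Real.arcsin (Real.tanh ν))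
  have hchain := (hF.comp ν (harcsin.comp ν htanh))
  refine hchain.congr_deriv ?_
  symm
  rw [Real.sin_arcsin (by linarith) (by linarith)]
  rw [one_sub_tanh_sq]
  have hcsq : Real.sqrt (1 / Real.cosh ν ^ 2) = 1 / Real.cosh ν := by
    rw [one_div, Real.sqrt_inv, Real.sqrt_sq (Real.cosh_pos ν).le, one_div]
  rw [hcsq]
  have hc := Real.cosh_pos ν
  congr 1
  field_simp

lemma continuous_arctanh_comp {f : ℝ → ℝ} (hf : Continuous f) (h : ∀ x, |f x| < 1) :
    Continuous fun x => arctanh (f x) := by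
  unfold arctanh
  apply Continuous.div_const
  apply Continuous.log
  · apply Continuous.div (by continuity) (by continuity)
    intro x
    have := abs_lt.mp (h x)
    linarith [this.2]
  · intro x
    have h2 := abs_lt.mp (h x)
    have h3 : 0 < (1 + f x) / (1 - f x) := div_pos (by linarith [h2.1]) (by linarith [h2.2])
    exact ne_of_gt h3

section Wsec
variable {m : ℝ} (hm0 : 0 < m) (hm1 : m < 1)
include hm0 hm1

lemma W_sq_pos (u : ℝ) : 0 < 1 - m * Real.sin u ^ 2 := by
  nlinarith [Real.sin_sq_le_one u, sq_nonneg (Real.sin u)]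

lemma W_pos (u : ℝ) : 0 < Real.sqrt (1 - m * Real.sin u ^ 2) :=
  Real.sqrt_pos.mpr (W_sq_pos hm0 hm1 u)

lemma W_le_one (u : ℝ) : Real.sqrt (1 - m * Real.sin u ^ 2) ≤ 1 := by
  have h : (1:ℝ) - m * Real.sin u ^ 2 ≤ 1 := by nlinarith [sq_nonneg (Real.sin u)]
  calc Real.sqrt (1 - m * Real.sin u ^ 2) ≤ Real.sqrt 1 := Real.sqrt_le_sqrt h
    _ = 1 := Real.sqrt_one

omit hm0 hm1 in
lemma W_cont : Continuous fun u : ℝ => Real.sqrt (1 - m * Real.sin u ^ 2) :=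
  (by continuity : Continuous fun u : ℝ => 1 - m * Real.sin u ^ 2).sqrt

lemma tW_abs_lt (ν u : ℝ) : |Real.tanh ν * Real.sqrt (1 - m * Real.sin u ^ 2)| < 1 := by
  rw [abs_mul]
  have h1 : |Real.tanh ν| < 1 := abs_lt.mpr ⟨neg_one_lt_tanh' ν, tanh_lt_one' ν⟩
  have h2 : |Real.sqrt (1 - m * Real.sin u ^ 2)| ≤ 1 := by
    rw [abs_of_pos (W_pos hm0 hm1 u)]; exact W_le_one hm0 hm1 u
  nlinarith [abs_nonneg (Real.tanh ν), abs_nonneg (Real.sqrt (1 - m * Real.sin u ^ 2))]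

lemma phi_integrand_hasDerivAt (ν u : ℝ) :
    HasDerivAt (fun ν => arctanh (Real.tanh ν * Real.sqrt (1 - m * Real.sin u ^ 2))
        / Real.sqrt (1 - m * Real.sin u ^ 2))
      (1 / (1 + m * Real.sinh ν ^ 2 * Real.sin u ^ 2)) ν := by
  set W := Real.sqrt (1 - m * Real.sin u ^ 2) with hW
  have hW0 := W_pos hm0 hm1 u
  have hW2 : W ^ 2 = 1 - m * Real.sin u ^ 2 := Real.sq_sqrt (W_sq_pos hm0 hm1 u).le
  have habs := tW_abs_lt hm0 hm1 ν u
  have habs' := abs_lt.mp habs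
  have hch := Real.cosh_pos ν
  have hE := Real.cosh_sq_sub_sinh_sq ν
  have hA : 0 < 1 + m * Real.sinh ν ^ 2 * Real.sin u ^ 2 := by
    nlinarith [mul_nonneg (mul_nonneg hm0.le (sq_nonneg (Real.sinh ν))) (sq_nonneg (Real.sin u))]
  have hmul : HasDerivAt (fun ν => Real.tanh ν * W) (1 / Real.cosh ν ^ 2 * W) ν :=
    (tanh_hasDerivAt ν).mul_const W
  have harc := (arctanh_hasDerivAt habs'.1 habs'.2).comp ν hmul
  have hdiv := harc.div_const W
  refine hdiv.congr_deriv ?_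
  symm
  have h1mt : 1 - (Real.tanh ν * W) ^ 2
      = (1 + m * Real.sinh ν ^ 2 * Real.sin u ^ 2) / Real.cosh ν ^ 2 := by
    rw [mul_pow, hW2, Real.tanh_eq_sinh_div_cosh]
    field_simp
    linear_combination hE
  rw [h1mt]
  have hW0' : W ≠ 0 := ne_of_gt hW0
  field_simp

lemma phi_integrand_cont (ν : ℝ) :
    Continuous fun u => arctanh (Real.tanh ν * Real.sqrt (1 - m * Real.sin u ^ 2))
      / Real.sqrt (1 - m * Real.sin u ^ 2) := by
  apply Continuous.div
  · exact continuous_arctanh_comp (continuous_const.mul (W_cont (m := m))) (tW_abs_lt hm0 hm1 ν)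
  · exact W_cont (m := m)
  · exact fun u => ne_of_gt (W_pos hm0 hm1 u)

lemma phi_deriv_integrand_cont (ν : ℝ) :
    Continuous fun u : ℝ => 1 / (1 + m * Real.sinh ν ^ 2 * Real.sin u ^ 2) := by
  apply Continuous.div continuous_const (by continuity)
  intro u
  nlinarith [mul_nonneg (mul_nonneg hm0.le (sq_nonneg (Real.sinh ν))) (sq_nonneg (Real.sin u))]

lemma phi_hasDerivAt (ν₀ : ℝ) :
    HasDerivAt (fun ν => ∫ u in (0:ℝ)..(π/2),
        arctanh (Real.tanh ν * Real.sqrt (1 - m * Real.sin u ^ 2))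
          / Real.sqrt (1 - m * Real.sin u ^ 2))
      (π / (2 * Real.sqrt (1 + m * Real.sinh ν₀ ^ 2))) ν₀ := by
  have key := (intervalIntegral.hasDerivAt_integral_of_dominated_loc_of_deriv_le
    (F := fun ν u => arctanh (Real.tanh ν * Real.sqrt (1 - m * Real.sin u ^ 2))
      / Real.sqrt (1 - m * Real.sin u ^ 2))
    (F' := fun ν u => 1 / (1 + m * Real.sinh ν ^ 2 * Real.sin u ^ 2))
    (x₀ := ν₀) (a := (0:ℝ)) (b := π/2) (bound := fun _ => (1:ℝ)) (μ := MeasureTheory.volume)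
    (s := Metric.ball ν₀ 1) (Metric.ball_mem_nhds ν₀ one_pos)
    (Filter.Eventually.of_forall fun ν =>
      ((phi_integrand_cont hm0 hm1 ν).aestronglyMeasurable).restrict)
    ((phi_integrand_cont hm0 hm1 ν₀).intervalIntegrable _ _)
    ((phi_deriv_integrand_cont hm0 hm1 ν₀).aestronglyMeasurable).restrict
    (Filter.Eventually.of_forall fun u _ x _ => by
      have hA : 0 < 1 + m * Real.sinh x ^ 2 * Real.sin u ^ 2 := by
        nlinarith [mul_nonneg (mul_nonneg hm0.le (sq_nonneg (Real.sinh x))) (sq_nonneg (Real.sin u))]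
      have hA1 : 1 ≤ 1 + m * Real.sinh x ^ 2 * Real.sin u ^ 2 := by
        nlinarith [mul_nonneg (mul_nonneg hm0.le (sq_nonneg (Real.sinh x))) (sq_nonneg (Real.sin u))]
      rw [Real.norm_eq_abs, abs_of_pos (by positivity)]
      rw [div_le_one hA] at *
      linarith)
    (intervalIntegrable_const)
    (Filter.Eventually.of_forall fun u _ x _ => phi_integrand_hasDerivAt hm0 hm1 x u)).2
  have hval : (∫ u in (0:ℝ)..(π/2), 1 / (1 + m * Real.sinh ν₀ ^ 2 * Real.sin u ^ 2))
      = π / (2 * Real.sqrt (1 + m * Real.sinh ν₀ ^ 2)) := by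
    have := sin_sq_integral (b := m * Real.sinh ν₀ ^ 2) (by positivity)
    simpa [mul_assoc] using this
  rwa [hval] at key
end Wsec

lemma J_eq {m μ : ℝ} (hm0 : 0 < m) (hm1 : m < 1) (hμ : 0 ≤ μ) :
    (∫ u in (0:ℝ)..(π/2), arctanh (Real.tanh μ * Real.sqrt (1 - m * Real.sin u ^ 2))
        / Real.sqrt (1 - m * Real.sin u ^ 2))
      = π / 2 * ellipticF (Real.arcsin (Real.tanh μ)) (Real.sqrt (1 - m)) := by
  set kk := Real.sqrt (1 - m) with hkk
  have hkk2 : kk ^ 2 = 1 - m := Real.sq_sqrt (by linarith)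
  have hkk2lt : kk ^ 2 < 1 := by rw [hkk2]; linarith
  set f : ℝ → ℝ := fun ν => ∫ u in (0:ℝ)..(π/2),
    arctanh (Real.tanh ν * Real.sqrt (1 - m * Real.sin u ^ 2))
      / Real.sqrt (1 - m * Real.sin u ^ 2) with hf
  set g : ℝ → ℝ := fun ν => π / 2 * ellipticF (Real.arcsin (Real.tanh ν)) kk with hg
  set f' : ℝ → ℝ := fun x => π / (2 * Real.sqrt (1 + m * Real.sinh x ^ 2)) with hf'
  have derivf : ∀ x, HasDerivAt f (f' x) x := fun x => phi_hasDerivAt hm0 hm1 x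
  have derivg : ∀ x, HasDerivAt g (f' x) x := by
    intro x
    have h := (psi_hasDerivAt hkk2lt x).const_mul (π / 2)
    have hch := Real.cosh_pos x
    have hE := Real.cosh_sq_sub_sinh_sq x
    have ht := abs_lt.mpr ⟨neg_one_lt_tanh' x, tanh_lt_one' x⟩
    have hpos : 0 < 1 - kk ^ 2 * Real.tanh x ^ 2 := by
      rw [hkk2]
      have h2 := abs_lt.mp ht
      nlinarith [sq_nonneg (Real.tanh x), mul_nonneg hm0.le (sq_nonneg (Real.tanh x)), h2.1, h2.2]
    have hsqrt : Real.sqrt (1 + m * Real.sinh x ^ 2)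
        = Real.cosh x * Real.sqrt (1 - kk ^ 2 * Real.tanh x ^ 2) := by
      rw [← Real.sqrt_sq hch.le, ← Real.sqrt_mul (sq_nonneg _)]
      congr 1
      rw [hkk2, Real.tanh_eq_sinh_div_cosh]
      field_simp
      linear_combination -hE
    have hval : π / 2 * ((1 - kk ^ 2 * Real.tanh x ^ 2) ^ (-(1:ℝ)/2) * (1 / Real.cosh x))
        = f' x := by
      show _ = π / (2 * Real.sqrt (1 + m * Real.sinh x ^ 2))
      rw [rpow_neg_half_eq hpos.le, hsqrt]
      have hs0 : 0 < Real.sqrt (1 - kk ^ 2 * Real.tanh x ^ 2) := Real.sqrt_pos.mpr hpos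
      rw [eq_div_iff (by positivity)]
      field_simp
    rw [← hval]
    exact h
  have h0 : f 0 = g 0 := by
    have hfz : f 0 = 0 := by
      rw [hf]
      simp [Real.tanh_zero, arctanh_zero]
    have hgz : g 0 = 0 := by
      rw [hg]
      simp [Real.tanh_zero, Real.arcsin_zero, ellipticF, intervalIntegral.integral_same]
    rw [hfz, hgz]
  have key := eq_of_has_deriv_right_eq (a := 0) (b := μ) (f' := f')
    (fun x _ => (derivf x).hasDerivWithinAt) (fun x _ => (derivg x).hasDerivWithinAt)
    (fun x _ => (derivf x).continuousAt.continuousWithinAt)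
    (fun x _ => (derivg x).continuousAt.continuousWithinAt) h0
  exact key μ (Set.right_mem_Icc.mpr hμ)


theorem stmt_8 (k μ : ℝ) (hk0 : 0 < k) (hk1 : k < 1) (hμ : 0 < μ)
    (k' φ : ℝ) (hk' : k' = Real.sqrt (1 - k ^ 2))
    (hφ : φ = Real.arcsin (Real.tanh μ)) :
    (∫ u in (0:ℝ)..(Real.pi / 2),
        ellipticF u k' * Real.sin u * Real.cos u /
          ((1 + k' ^ 2 * Real.sinh μ ^ 2 * Real.sin u ^ 2)
            * Real.sqrt (1 - k' ^ 2 * Real.sin u ^ 2)))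
      = -1 / (k' ^ 2 * Real.sinh μ * Real.cosh μ) *
          (completeK k' * arctanh (k * Real.tanh μ) - Real.pi / 2 * ellipticF φ k) := by
  have hk2 : k ^ 2 < 1 := by nlinarith
  have hm0 : 0 < k' ^ 2 := by
    rw [hk']
    have : (0:ℝ) < 1 - k ^ 2 := by linarith
    rw [Real.sq_sqrt this.le]
    exact this
  have hk'sq : k' ^ 2 = 1 - k ^ 2 := by
    rw [hk', Real.sq_sqrt (by linarith : (0:ℝ) ≤ 1 - k ^ 2)]
  have hm1 : k' ^ 2 < 1 := by rw [hk'sq]; nlinarith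
  have hsh : 0 < Real.sinh μ := Real.sinh_pos_iff.mpr hμ
  have hch : 0 < Real.cosh μ := Real.cosh_pos μ
  have hE := Real.cosh_sq_sub_sinh_sq μ
  have htc : Real.tanh μ * Real.cosh μ = Real.sinh μ := by
    rw [Real.tanh_eq_sinh_div_cosh]; field_simp
  have hkkk : Real.sqrt (1 - k' ^ 2) = k := by
    rw [hk'sq, show (1:ℝ) - (1 - k ^ 2) = k ^ 2 by ring, Real.sqrt_sq hk0.le]
  set m := k' ^ 2 with hm
  set c : ℝ := -(1 / (m * Real.sinh μ * Real.cosh μ)) with hc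
  set W : ℝ → ℝ := fun u => Real.sqrt (1 - m * Real.sin u ^ 2) with hW
  set H : ℝ → ℝ := fun u => c * arctanh (Real.tanh μ * W u) with hH
  set g : ℝ → ℝ := fun u => Real.sin u * Real.cos u /
    ((1 + m * Real.sinh μ ^ 2 * Real.sin u ^ 2) * W u) with hg
  have hWpos : ∀ u, 0 < W u := fun u => W_pos hm0 hm1 u
  have hWsq : ∀ u, W u ^ 2 = 1 - m * Real.sin u ^ 2 :=
    fun u => Real.sq_sqrt (W_sq_pos hm0 hm1 u).le
  have hHderiv : ∀ u, HasDerivAt H (g u) u := by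
    intro u
    have hin : HasDerivAt (fun u : ℝ => 1 - m * Real.sin u ^ 2)
        (-(m * (2 * Real.sin u * Real.cos u))) u := by
      have := ((Real.hasDerivAt_sin u).pow 2).const_mul m
      have h2 := (this.const_sub 1)
      refine h2.congr_deriv ?_
      symm
      ring
    have hWd : HasDerivAt W (-(m * (2 * Real.sin u * Real.cos u)) / (2 * W u)) u :=
      hin.sqrt (ne_of_gt (W_sq_pos hm0 hm1 u))
    have hmul := hWd.const_mul (Real.tanh μ)
    have habs := abs_lt.mp (tW_abs_lt hm0 hm1 μ u)
    have harc := (arctanh_hasDerivAt habs.1 habs.2).comp u hmul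
    have hfin := harc.const_mul c
    refine hfin.congr_deriv ?_
    symm
    have h1mt : 1 - (Real.tanh μ * W u) ^ 2
        = (1 + m * Real.sinh μ ^ 2 * Real.sin u ^ 2) / Real.cosh μ ^ 2 := by
      rw [mul_pow, hWsq u, Real.tanh_eq_sinh_div_cosh]
      field_simp
      linear_combination hE
    rw [hg, hc]
    show Real.sin u * Real.cos u / ((1 + m * Real.sinh μ ^ 2 * Real.sin u ^ 2) * W u)
      = -(1 / (m * Real.sinh μ * Real.cosh μ)) *
        (1 / (1 - (Real.tanh μ * W u) ^ 2) * (Real.tanh μ * (-(m * (2 * Real.sin u * Real.cos u)) / (2 * W u))))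
    rw [h1mt]
    have hA : 0 < 1 + m * Real.sinh μ ^ 2 * Real.sin u ^ 2 := by
      nlinarith [mul_nonneg (mul_nonneg hm0.le (sq_nonneg (Real.sinh μ))) (sq_nonneg (Real.sin u))]
    have hWu := hWpos u
    field_simp
    linear_combination (-(Real.sin u * Real.cos u)) * htc
  have hgcont : Continuous g := by
    rw [hg]
    apply Continuous.div (Real.continuous_sin.mul Real.continuous_cos)
    · exact (continuous_const.add (continuous_const.mul (Real.continuous_sin.pow 2))).mul
        (W_cont (m := m))
    · intro u
      have hA : 0 < 1 + m * Real.sinh μ ^ 2 * Real.sin u ^ 2 := by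
        nlinarith [mul_nonneg (mul_nonneg hm0.le (sq_nonneg (Real.sinh μ))) (sq_nonneg (Real.sin u))]
      exact ne_of_gt (mul_pos hA (hWpos u))
  have hibp := intervalIntegral.integral_mul_deriv_eq_deriv_mul (a := (0:ℝ)) (b := π/2)
    (u := fun x => ellipticF x k') (u' := fun x => (1 - k' ^ 2 * Real.sin x ^ 2) ^ (-(1:ℝ)/2))
    (v := H) (v' := g)
    (fun x _ => ellipticF_hasDerivAt hm1 x) (fun x _ => hHderiv x)
    ((ellipticF_integrand_cont hm1).intervalIntegrable _ _)
    (hgcont.intervalIntegrable _ _)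
  have hLHS : (∫ u in (0:ℝ)..(Real.pi / 2),
        ellipticF u k' * Real.sin u * Real.cos u /
          ((1 + k' ^ 2 * Real.sinh μ ^ 2 * Real.sin u ^ 2)
            * Real.sqrt (1 - k' ^ 2 * Real.sin u ^ 2)))
      = ∫ u in (0:ℝ)..(π/2), ellipticF u k' * g u := by
    apply intervalIntegral.integral_congr
    intro u _
    rw [hg]
    show ellipticF u k' * Real.sin u * Real.cos u /
        ((1 + m * Real.sinh μ ^ 2 * Real.sin u ^ 2) * W u)
      = ellipticF u k' * (Real.sin u * Real.cos u /
        ((1 + m * Real.sinh μ ^ 2 * Real.sin u ^ 2) * W u))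
    ring
  have hF0 : ellipticF 0 k' = 0 := intervalIntegral.integral_same
  have hWpi : W (π/2) = k := by
    rw [hW]
    simp only [Real.sin_pi_div_two, one_pow, mul_one]
    exact hkkk
  have hJ := J_eq (m := m) (μ := μ) hm0 hm1 hμ.le
  rw [hkkk, ← hφ] at hJ
  have hint2 : (∫ x in (0:ℝ)..(π/2), (1 - k' ^ 2 * Real.sin x ^ 2) ^ (-(1:ℝ)/2) * H x)
      = c * (π / 2 * ellipticF φ k) := by
    have hcong : ∀ x ∈ Set.uIcc (0:ℝ) (π/2),
        (1 - k' ^ 2 * Real.sin x ^ 2) ^ (-(1:ℝ)/2) * H x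
          = c * (arctanh (Real.tanh μ * W x) / W x) := by
      intro x _
      rw [rpow_neg_half_eq (W_sq_pos hm0 hm1 x).le, hH]
      show 1 / W x * (c * arctanh (Real.tanh μ * W x)) = _
      field_simp
    rw [intervalIntegral.integral_congr hcong, intervalIntegral.integral_const_mul, hJ]
  rw [hLHS, hibp]
  beta_reduce
  have hHpi : H (π / 2) = c * arctanh (Real.tanh μ * k) := by
    show c * arctanh (Real.tanh μ * W (π / 2)) = _
    rw [hWpi]
  rw [hF0, hint2, hHpi, show Real.tanh μ * k = k * Real.tanh μ from mul_comm _ _, hc, completeK]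
  ring
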